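/- arXiv:1107.1709 — 5 statements merged into one kernel-verified Lean document; each statement's English description precedes it below -/
import Mathlib

section
/- Let N, P, K, L ∈ ℕ with P ≤ N and L ≥ 2, let α ∈ (0,1], ρ > 0, L̄ = 1 + α(L−1), and let A ∈ ℂ^{N×P} satisfy A^H A = I_P. Fix indices j, m and define, for all k, R_{jjk} = (N/P) A A^H and R_{jlk} = α (N/P) A A^H for l ≠ j; for training SNR t > 0 define Q(t) = (t^{−1} I_N + L̄ (N/P) A A^H)^{−1} and Φ_{jlk}(t) = R_{jjk} Q(t) R_{jlk}. Then the limit as t → ∞ of γ̄^MF(t) = ((1/N) tr Φ_{jjm}(t))² / [ (1/(ρN²)) tr Φ_{jjm}(t) + (1/N) Σ_{l=1}^L Σ_{k=1}^K (1/N) tr(R_{jlk} Φ_{jjm}(t)) + Σ_{l≠j} |(1/N) tr Φ_{jlm}(t)|² ] exists and equals 1 / ( L̄/(ρN) + (K/P) L̄² + α(L̄ − 1) ). -/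
/-! Since `AᴴA = 1`, `M = AAᴴ` is an idempotent of trace `P`, and every matrix of the model is a
real multiple of `M`: `R_{jl} = w_l (N/P) M` with `w_j = 1`, `w_l = α` otherwise.  On the algebra
spanned by `1` and an idempotent, `(a + bM)⁻¹ = a⁻¹ + ((a + b)⁻¹ - a⁻¹) M`, so
`Φ_{jl}(t) = w_l u(t) (N/P) M` with `u(t) = (N/P) / (t⁻¹ + L̄ N/P)`.  All traces are then explicit
and the SINR collapses to `((1/(ρN) + (K/P) L̄) / u(t) + α(L̄ - 1))⁻¹`; finally `u(t) → 1/L̄`. -/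

open Matrix Filter

theorem IsIdempotentElem.smul_mul_smul {K R : Type*} [CommSemiring K] [Semiring R] [Algebra K R]
    {M : R} (hM : IsIdempotentElem M) (a b : K) : (a • M) * (b • M) = (a * b) • M := by
  rw [smul_mul_smul_comm, hM.eq]

theorem Matrix.inv_smul_one_add_smul_of_isIdempotentElem {n K : Type*} [Fintype n]
    [DecidableEq n] [Field K] {M : Matrix n n K} (hM : IsIdempotentElem M) {a b : K}
    (ha : a ≠ 0) (hab : a + b ≠ 0) :
    (a • 1 + b • M)⁻¹ = a⁻¹ • 1 + ((a + b)⁻¹ - a⁻¹) • M := by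
  apply Matrix.inv_eq_right_inv
  simp only [Matrix.mul_add, Matrix.add_mul, Matrix.smul_mul, Matrix.mul_smul,
    Matrix.one_mul, Matrix.mul_one, hM.eq, smul_smul, ← add_smul]
  match_scalars
  · field_simp
  · field_simp; ring

theorem Matrix.smul_mul_inv_smul_one_add_smul_mul_smul {n K : Type*} [Fintype n]
    [DecidableEq n] [Field K] {M : Matrix n n K} (hM : IsIdempotentElem M) {a b : K}
    (ha : a ≠ 0) (hab : a + b ≠ 0) (x y : K) :
    (x • M) * (a • 1 + b • M)⁻¹ * (y • M) = (x * (a + b)⁻¹ * y) • M := by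
  rw [inv_smul_one_add_smul_of_isIdempotentElem hM ha hab, Matrix.mul_add, smul_mul_smul_comm,
    mul_one, hM.smul_mul_smul, ← add_smul, hM.smul_mul_smul]
  congr 1
  ring

theorem Matrix.isIdempotentElem_mul_conjTranspose_self {m n R : Type*} [Fintype n] [Fintype m]
    [DecidableEq n] [Semiring R] [StarRing R] {A : Matrix m n R} (hA : Aᴴ * A = 1) :
    IsIdempotentElem (A * Aᴴ) := by
  rw [IsIdempotentElem, Matrix.mul_assoc, ← Matrix.mul_assoc Aᴴ, hA, Matrix.one_mul]

theorem Matrix.trace_mul_conjTranspose_self {m R : Type*} [Fintype m] [CommSemiring R]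
    [StarRing R] {P : ℕ} {A : Matrix m (Fin P) R} (hA : Aᴴ * A = 1) : trace (A * Aᴴ) = P := by
  rw [Matrix.trace_mul_comm, hA, Matrix.trace_one, Fintype.card_fin]

theorem Matrix.trace_ofReal_smul {n : Type*} [Fintype n] {M : Matrix n n ℂ} {c : ℝ}
    (htr : trace M = c) (r : ℝ) : trace ((r : ℂ) • M) = ((r * c : ℝ) : ℂ) := by
  rw [trace_smul, htr, smul_eq_mul, Complex.ofReal_mul]

/-- `γ̄^MF`, with `Φ l` standing for `Φ_{jlm}`; the summand does not depend on `k`. -/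
noncomputable def mfSinr {N L : ℕ} (K : ℕ) (ρ : ℝ) (j : Fin L)
    (R Φ : Fin L → Matrix (Fin N) (Fin N) ℂ) : ℝ :=
  ((1 / (N : ℝ)) * (trace (Φ j)).re) ^ 2 /
    ((1 / (ρ * (N : ℝ) ^ 2)) * (trace (Φ j)).re
      + (1 / (N : ℝ)) * ∑ l, ∑ _k : Fin K, (1 / (N : ℝ)) * (trace (R l * Φ j)).re
      + ∑ l ∈ Finset.univ.erase j, ‖(1 / (N : ℂ)) * trace (Φ l)‖ ^ 2)

theorem mfSinr_of_smul_projection {N P K L : ℕ} (hN : N ≠ 0) (hP : P ≠ 0)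
    {M : Matrix (Fin N) (Fin N) ℂ} (hM : IsIdempotentElem M) (htr : trace M = P)
    {ρ α Lbar κ u : ℝ} (hLbar : Lbar = 1 + α * (L - 1)) (hκ : κ = N / P) (hu : u ≠ 0)
    {j : Fin L} {R Φ : Fin L → Matrix (Fin N) (Fin N) ℂ}
    (hRj : R j = (κ : ℂ) • M) (hRl : ∀ l ≠ j, R l = ((α * κ : ℝ) : ℂ) • M)
    (hΦj : Φ j = ((u * κ : ℝ) : ℂ) • M) (hΦl : ∀ l ≠ j, Φ l = ((u * (α * κ) : ℝ) : ℂ) • M) :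
    mfSinr K ρ j R Φ
      = ((1 / (ρ * N) + K / P * Lbar) * u⁻¹ + α * (Lbar - 1))⁻¹ := by
  have htr' := trace_ofReal_smul htr
  have hL : 1 ≤ L := Fin.pos j
  have hcard : ((Finset.univ.erase j).card : ℝ) = L - 1 := by
    rw [Finset.card_erase_of_mem (Finset.mem_univ j), Finset.card_univ, Fintype.card_fin,
      Nat.cast_sub hL, Nat.cast_one]
  have hcross : ∑ l, ∑ _k : Fin K, (1 / (N : ℝ)) * (trace (R l * Φ j)).re
      = K * (1 + α * (L - 1)) * u * κ ^ 2 * P / N := by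
    simp only [Finset.sum_const, Finset.card_univ, Fintype.card_fin, nsmul_eq_mul]
    rw [← Finset.add_sum_erase _ _ (Finset.mem_univ j), Finset.sum_congr rfl fun l hl => by
      rw [hRl l (Finset.ne_of_mem_erase hl), hΦj, hM.smul_mul_smul, ← Complex.ofReal_mul, htr',
        Complex.ofReal_re], Finset.sum_const, nsmul_eq_mul, hcard, hRj, hΦj, hM.smul_mul_smul,
      ← Complex.ofReal_mul, htr', Complex.ofReal_re]
    ring
  have hinter : ∑ l ∈ Finset.univ.erase j, ‖(1 / (N : ℂ)) * trace (Φ l)‖ ^ 2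
      = (L - 1) * (α * u * κ * P / N) ^ 2 := by
    rw [Finset.sum_congr rfl fun l hl => by rw [hΦl l (Finset.ne_of_mem_erase hl), htr'],
      Finset.sum_const, nsmul_eq_mul, hcard, one_div, ← Complex.ofReal_natCast,
      ← Complex.ofReal_inv, ← Complex.ofReal_mul, Complex.norm_real, Real.norm_eq_abs, sq_abs]
    ring
  rw [mfSinr, hcross, hinter, hΦj, htr', Complex.ofReal_re, hκ, hLbar]
  field_simp
  ring

theorem tendsto_inv_mul_inv_add_atTop {κ : ℝ} (hκ : κ ≠ 0) (Lbar a d : ℝ)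
    (h : a * Lbar + d ≠ 0) :
    Tendsto (fun t : ℝ => (a * (κ * (t⁻¹ + Lbar * κ)⁻¹)⁻¹ + d)⁻¹) atTop
      (nhds (a * Lbar + d)⁻¹) := by
  have hu := (tendsto_inv_atTop_zero.add_const (κ * Lbar)).const_mul κ⁻¹
  rw [zero_add, inv_mul_cancel_left₀ hκ] at hu
  refine ((hu.const_mul a).add_const d).inv₀ h |>.congr fun t => ?_
  rw [mul_inv, inv_inv, mul_comm κ Lbar]

theorem stmt3_general
    (N P K L : ℕ) (hP : 0 < P) (hPN : P ≤ N)
    (α : ℝ) (hα0 : 0 < α) (ρ : ℝ) (hρ : 0 < ρ)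
    (Lbar : ℝ) (hLbar : Lbar = 1 + α * (L - 1))
    (A : Matrix (Fin N) (Fin P) ℂ) (hA : Aᴴ * A = 1)
    (j : Fin L)
    (R : Fin L → Matrix (Fin N) (Fin N) ℂ)
    (hRj : R j = ((N : ℂ) / (P : ℂ)) • (A * Aᴴ))
    (hRl : ∀ l, l ≠ j → R l = (α : ℂ) • ((N : ℂ) / (P : ℂ)) • (A * Aᴴ))
    (Q : ℝ → Matrix (Fin N) (Fin N) ℂ)
    (hQ : ∀ t, Q t = (((t : ℂ))⁻¹ • (1 : Matrix (Fin N) (Fin N) ℂ)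
        + (Lbar : ℂ) • ((N : ℂ) / (P : ℂ)) • (A * Aᴴ))⁻¹)
    (Φ : ℝ → Fin L → Matrix (Fin N) (Fin N) ℂ)
    (hΦ : ∀ t l, Φ t l = R j * Q t * R l) :
    Tendsto (fun t : ℝ =>
      ((1 / (N : ℝ)) * (Matrix.trace (Φ t j)).re) ^ 2 /
        ((1 / (ρ * (N : ℝ) ^ 2)) * (Matrix.trace (Φ t j)).re
          + (1 / (N : ℝ)) * ∑ l, ∑ _k : Fin K,
              (1 / (N : ℝ)) * (Matrix.trace (R l * Φ t j)).re
          + ∑ l ∈ Finset.univ.erase j,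
              ‖(1 / (N : ℂ)) * Matrix.trace (Φ t l)‖ ^ 2))
      atTop
      (nhds (1 / (Lbar / (ρ * (N : ℝ)) + ((K : ℝ) / (P : ℝ)) * Lbar ^ 2
        + α * (Lbar - 1)))) := by
  have hN : N ≠ 0 := (hP.trans_le hPN).ne'
  have hL : (0 : ℝ) ≤ L - 1 := sub_nonneg.2 (Nat.one_le_cast.2 (Fin.pos j))
  have hLbar_sub : 0 ≤ Lbar - 1 := by rw [hLbar, add_sub_cancel_left]; positivity
  have hLbar_pos : 0 < Lbar := by linarith
  set κ : ℝ := N / P with hκ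
  have hκ_pos : 0 < κ := by positivity
  have hκC : (N : ℂ) / P = κ := by push_cast [κ]; rfl
  have hM := isIdempotentElem_mul_conjTranspose_self hA
  have hRj' : R j = (κ : ℂ) • (A * Aᴴ) := by rw [hRj, hκC]
  have hRl' : ∀ l ≠ j, R l = ((α * κ : ℝ) : ℂ) • (A * Aᴴ) := fun l hl => by
    rw [hRl l hl, hκC, smul_smul, Complex.ofReal_mul]
  have hΦt : ∀ t, 0 < t → ∀ l (c : ℝ), R l = (c : ℂ) • (A * Aᴴ) →
      Φ t l = ((κ * (t⁻¹ + Lbar * κ)⁻¹ * c : ℝ) : ℂ) • (A * Aᴴ) := by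
    intro t ht l c hc
    have hpos : 0 < t⁻¹ + Lbar * κ := by positivity
    rw [hΦ, hc, hRj', hQ, hκC, smul_smul, smul_mul_inv_smul_one_add_smul_mul_smul hM
      (by simpa using ht.ne') (by exact_mod_cast hpos.ne')]
    push_cast; rfl
  have hsinr : ∀ᶠ t in atTop, mfSinr K ρ j R (Φ t)
      = ((1 / (ρ * N) + K / P * Lbar) * (κ * (t⁻¹ + Lbar * κ)⁻¹)⁻¹ + α * (Lbar - 1))⁻¹ := by
    filter_upwards [eventually_gt_atTop 0] with t ht
    exact mfSinr_of_smul_projection hN hP.ne' hM (trace_mul_conjTranspose_self hA) hLbar hκ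
      (by positivity) hRj' hRl' (hΦt t ht j κ hRj') fun l hl => hΦt t ht l _ (hRl' l hl)
  have hlim := tendsto_inv_mul_inv_add_atTop hκ_pos.ne' Lbar (1 / (ρ * N) + K / P * Lbar)
    (α * (Lbar - 1)) (add_pos_of_pos_of_nonneg (by positivity) (mul_nonneg hα0.le hLbar_sub)).ne'
  rw [show (1 / (ρ * N) + K / P * Lbar) * Lbar + α * (Lbar - 1)
    = Lbar / (ρ * N) + K / P * Lbar ^ 2 + α * (Lbar - 1) by ring, ← one_div] at hlim
  exact hlim.congr' (hsinr.mono fun _ h => h.symm)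

/-- Closed form of the matched-filter deterministic-equivalent SINR
under the physical channel model (`A` with `P` orthonormal columns, intercell factor
`α`, `L̄ = 1 + α(L−1)`) in the perfect-training limit `t → ∞`:
`γ̄^MF(t) → 1/(L̄/(ρN) + (K/P)L̄² + α(L̄−1))`. -/
theorem stmt3
    (N P K L : ℕ) (hP : 0 < P) (hPN : P ≤ N) (hL : 2 ≤ L)
    (α : ℝ) (hα0 : 0 < α) (hα1 : α ≤ 1) (ρ : ℝ) (hρ : 0 < ρ)
    (Lbar : ℝ) (hLbar : Lbar = 1 + α * (L - 1))
    (A : Matrix (Fin N) (Fin P) ℂ) (hA : Aᴴ * A = 1)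
    (j : Fin L) (m : Fin K)
    (R : Fin L → Matrix (Fin N) (Fin N) ℂ)
    (hRj : R j = ((N : ℂ) / (P : ℂ)) • (A * Aᴴ))
    (hRl : ∀ l, l ≠ j → R l = (α : ℂ) • ((N : ℂ) / (P : ℂ)) • (A * Aᴴ))
    (Q : ℝ → Matrix (Fin N) (Fin N) ℂ)
    (hQ : ∀ t, Q t = (((t : ℂ))⁻¹ • (1 : Matrix (Fin N) (Fin N) ℂ)
        + (Lbar : ℂ) • ((N : ℂ) / (P : ℂ)) • (A * Aᴴ))⁻¹)
    (Φ : ℝ → Fin L → Matrix (Fin N) (Fin N) ℂ)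
    (hΦ : ∀ t l, Φ t l = R j * Q t * R l) :
    Tendsto (fun t : ℝ =>
      ((1 / (N : ℝ)) * (Matrix.trace (Φ t j)).re) ^ 2 /
        ((1 / (ρ * (N : ℝ) ^ 2)) * (Matrix.trace (Φ t j)).re
          + (1 / (N : ℝ)) * ∑ l, ∑ _k : Fin K,
              (1 / (N : ℝ)) * (Matrix.trace (R l * Φ t j)).re
          + ∑ l ∈ Finset.univ.erase j,
              ‖(1 / (N : ℂ)) * Matrix.trace (Φ t l)‖ ^ 2))
      atTop
      (nhds (1 / (Lbar / (ρ * (N : ℝ)) + ((K : ℝ) / (P : ℝ)) * Lbar ^ 2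
        + α * (Lbar - 1)))) :=
  stmt3_general N P K L hP hPN α hα0 ρ hρ Lbar hLbar A hA j R hRj hRl Q hQ Φ hΦ
end

section
/- Let α ∈ (0,1], L ≥ 2, L̄ = 1 + α(L−1), ρ > 0, η ∈ (0,1), and N, P, K positive reals. Define γ̄^MF = 1 / ( L̄/(ρN) + (K/P) L̄² + α(L̄ − 1) ), R̄^MF = log₂(1 + γ̄^MF), γ_∞ = 1/(α(L̄−1)), R_∞ = log₂(1 + γ_∞). Then R̄^MF ≥ η R_∞ if and only if L̄/(ρN) + (K/P) L̄² + α(L̄−1) ≤ 1/((1+γ_∞)^η − 1). Moreover, if c₀ := 1/( L̄² [(1+γ_∞)^η − 1] ) − 1/(ρ N L̄) − α(L̄−1)/L̄² > 0, then R̄^MF ≥ η R_∞ if and only if P/K ≥ 1/c₀. -/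
/-- Characterization of the massive MIMO condition `R̄^MF ≥ η R_∞`:
it holds iff the denominator of `γ̄^MF` is at most `1/((1+γ_∞)^η − 1)`, and if
`c₀ = 1/(L̄²[(1+γ_∞)^η − 1]) − 1/(ρNL̄) − α(L̄−1)/L̄² > 0`, iff `P/K ≥ 1/c₀`. -/
theorem stmt5
    (α : ℝ) (hα0 : 0 < α) (hα1 : α ≤ 1) (L : ℕ) (hL : 2 ≤ L) (ρ : ℝ) (hρ : 0 < ρ)
    (η : ℝ) (hη0 : 0 < η) (hη1 : η < 1)
    (N P K : ℝ) (hN : 0 < N) (hP : 0 < P) (hK : 0 < K)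
    (Lbar γMF RMF γinf Rinf c₀ : ℝ)
    (hLbar : Lbar = 1 + α * (L - 1))
    (hγMF : γMF = 1 / (Lbar / (ρ * N) + (K / P) * Lbar ^ 2 + α * (Lbar - 1)))
    (hRMF : RMF = Real.logb 2 (1 + γMF))
    (hγinf : γinf = 1 / (α * (Lbar - 1)))
    (hRinf : Rinf = Real.logb 2 (1 + γinf))
    (hc₀ : c₀ = 1 / (Lbar ^ 2 * ((1 + γinf) ^ η - 1)) - 1 / (ρ * N * Lbar)
        - α * (Lbar - 1) / Lbar ^ 2) :
    (RMF ≥ η * Rinf ↔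
      Lbar / (ρ * N) + (K / P) * Lbar ^ 2 + α * (Lbar - 1) ≤ 1 / ((1 + γinf) ^ η - 1)) ∧
    (0 < c₀ → (RMF ≥ η * Rinf ↔ P / K ≥ 1 / c₀)) := by
  have hL2 : (2:ℝ) ≤ (L:ℝ) := by exact_mod_cast hL
  have hLbar1 : 1 < Lbar := by
    rw [hLbar]; nlinarith
  have ha : 0 < α * (Lbar - 1) := mul_pos hα0 (by linarith)
  have hρN : 0 < ρ * N := mul_pos hρ hN
  have hLpos : (0:ℝ) < Lbar := by linarith
  have hD : 0 < Lbar / (ρ * N) + (K / P) * Lbar ^ 2 + α * (Lbar - 1) :=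
    add_pos (add_pos (div_pos hLpos hρN) (mul_pos (div_pos hK hP) (pow_pos hLpos 2))) ha
  set D := Lbar / (ρ * N) + (K / P) * Lbar ^ 2 + α * (Lbar - 1) with hDdef
  have hγinfpos : 0 < γinf := hγinf ▸ one_div_pos.mpr ha
  have hbase : (1:ℝ) < 1 + γinf := by linarith
  have hT : 0 < (1 + γinf) ^ η - 1 := by
    have := (Real.one_lt_rpow_iff_of_pos (by linarith : (0:ℝ) < 1 + γinf)).mpr
      (Or.inl ⟨hbase, hη0⟩)
    linarith
  set T := (1 + γinf) ^ η - 1 with hTdef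
  have hγMFpos : 0 < γMF := hγMF ▸ one_div_pos.mpr hD
  have hre : η * Rinf = Real.logb 2 ((1 + γinf) ^ η) := by
    rw [hRinf]
    simp [Real.logb, Real.log_rpow (by linarith : (0:ℝ) < 1 + γinf)]
    ring
  have key : RMF ≥ η * Rinf ↔ D ≤ 1 / T := by
    rw [hre, hRMF, ge_iff_le,
      Real.logb_le_logb (by norm_num) (by positivity) (by linarith)]
    have h1 : (1 + γinf) ^ η ≤ 1 + γMF ↔ T ≤ γMF := by
      constructor <;> intro h <;> simp only [hTdef] at * <;> linarith
    rw [h1, hγMF]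
    rw [le_div_iff₀ hD, le_div_iff₀ hT]
    constructor <;> intro h <;> nlinarith
  refine ⟨key, fun hc => ?_⟩
  rw [key]
  have hc' : c₀ * Lbar ^ 2 = 1 / T - Lbar / (ρ * N) - α * (Lbar - 1) := by
    rw [hc₀]
    field_simp
  constructor
  · intro h
    have hKP : K / P ≤ c₀ := by
      have h2 : (K / P) * Lbar ^ 2 ≤ c₀ * Lbar ^ 2 := by rw [hc']; simp only [hDdef] at h; linarith
      exact le_of_mul_le_mul_right h2 (pow_pos hLpos 2)
    rw [ge_iff_le, div_le_div_iff₀ hc hK]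
    have := (div_le_iff₀ hP).mp hKP
    ring_nf
    ring_nf at this
    linarith
  · intro h
    rw [ge_iff_le, div_le_div_iff₀ hc hK] at h
    have hKP : K / P ≤ c₀ := by
      rw [div_le_iff₀ hP]; ring_nf; ring_nf at h; linarith
    have h2 : (K / P) * Lbar ^ 2 ≤ c₀ * Lbar ^ 2 :=
      mul_le_mul_of_nonneg_right hKP (by positivity)
    rw [hc'] at h2
    simp only [hDdef]; linarith
end

section
/- Let N, P, K ∈ ℕ with P ≤ N, L ≥ 2, α ∈ (0,1], L̄ = 1 + α(L−1), λ > 0, and let A ∈ ℂ^{N×P} satisfy A^H A = I_P. Let Φ = (N/(P L̄)) A A^H and S = (K/P)(L̄ − 1/L̄) A A^H. Consider the fixed-point equation for δ ≥ 0: δ = (1/N) tr( Φ ( (K/N) Φ/(1+δ) + S + λ I_N )^{−1} ). This equation is equivalent to the scalar equation δ [ (K/P)/(1+δ) + (K/P)(L̄² − 1) + λ L̄ ] = 1, and its unique nonnegative solution is δ = [ 1 − λL̄ − (K/P)L̄² + √( (1 + λL̄ + (K/P)L̄²)² − 4K/P ) ] / ( 2[ λL̄ + (K/P)(L̄² − 1)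 ] ). -/
open Matrix Filter


lemma proj_inv {n : ℕ} (Q : Matrix (Fin n) (Fin n) ℂ) (hQ : Q * Q = Q)
    (c lam : ℂ) (hcl : c + lam ≠ 0) (hl : lam ≠ 0) :
    (c • Q + lam • (1 : Matrix (Fin n) (Fin n) ℂ))⁻¹
      = ((c + lam)⁻¹ - lam⁻¹) • Q + lam⁻¹ • 1 := by
  apply Matrix.inv_eq_right_inv
  simp only [Matrix.add_mul, Matrix.mul_add, Matrix.smul_mul, Matrix.mul_smul,
    hQ, Matrix.one_mul, Matrix.mul_one, smul_smul, smul_add]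
  match_scalars <;> field_simp <;> ring

lemma tr_proj {n p : ℕ} (A : Matrix (Fin n) (Fin p) ℂ) (hA : Aᴴ * A = 1) :
    Matrix.trace (A * Aᴴ) = (p : ℂ) := by
  rw [Matrix.trace_mul_comm, hA, Matrix.trace_one]
  simp

set_option maxHeartbeats 1000000 in
/-- Under the physical channel model (`Φ = (N/(PL̄))AAᴴ`,
`S = (K/P)(L̄ − 1/L̄)AAᴴ`), the matrix fixed-point equation
`δ = (1/N) tr(Φ((K/N)Φ/(1+δ) + S + λI)⁻¹)` for `δ ≥ 0` is equivalent to the scalar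
equation `δ[(K/P)/(1+δ) + (K/P)(L̄²−1) + λL̄] = 1`, whose unique nonnegative
solution is the stated closed form. -/
theorem stmt6
    (N P K L : ℕ) (hP : 0 < P) (hPN : P ≤ N) (hL : 2 ≤ L)
    (α : ℝ) (hα0 : 0 < α) (hα1 : α ≤ 1) (lam : ℝ) (hlam : 0 < lam)
    (Lbar : ℝ) (hLbar : Lbar = 1 + α * (L - 1))
    (A : Matrix (Fin N) (Fin P) ℂ) (hA : Aᴴ * A = 1)
    (Φ S : Matrix (Fin N) (Fin N) ℂ)
    (hΦ : Φ = ((N : ℂ) / ((P : ℂ) * (Lbar : ℂ))) • (A * Aᴴ))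
    (hS : S = (((K : ℂ) / (P : ℂ)) * ((Lbar : ℂ) - (Lbar : ℂ)⁻¹)) • (A * Aᴴ))
    (matrixEq scalarEq : ℝ → Prop)
    (hmx : ∀ δ : ℝ, matrixEq δ ↔
      δ = (1 / (N : ℝ)) * (Matrix.trace (Φ *
        ((((K : ℂ) / (N : ℂ)) * ((1 : ℂ) + (δ : ℂ))⁻¹) • Φ + S
          + (lam : ℂ) • (1 : Matrix (Fin N) (Fin N) ℂ))⁻¹)).re)
    (hsc : ∀ δ : ℝ, scalarEq δ ↔
      δ * (((K : ℝ) / (P : ℝ)) / (1 + δ) + ((K : ℝ) / (P : ℝ)) * (Lbar ^ 2 - 1)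
        + lam * Lbar) = 1)
    (δstar : ℝ)
    (hδstar : δstar = (1 - lam * Lbar - ((K : ℝ) / (P : ℝ)) * Lbar ^ 2
        + Real.sqrt ((1 + lam * Lbar + ((K : ℝ) / (P : ℝ)) * Lbar ^ 2) ^ 2
          - 4 * ((K : ℝ) / (P : ℝ))))
      / (2 * (lam * Lbar + ((K : ℝ) / (P : ℝ)) * (Lbar ^ 2 - 1)))) :
    (∀ δ : ℝ, 0 ≤ δ → (matrixEq δ ↔ scalarEq δ)) ∧
    0 ≤ δstar ∧ matrixEq δstar ∧
    (∀ δ : ℝ, 0 ≤ δ → matrixEq δ → δ = δstar) := by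
  -- basic positivity
  have hN : 0 < N := lt_of_lt_of_le hP hPN
  have hNR : (0:ℝ) < N := by exact_mod_cast hN
  have hPR : (0:ℝ) < P := by exact_mod_cast hP
  have hLR : (2:ℝ) ≤ L := by exact_mod_cast hL
  have hLb1 : 1 < Lbar := by nlinarith [hLbar]
  have hLb0 : 0 < Lbar := by linarith
  obtain ⟨a, ha_def⟩ : ∃ x : ℝ, x = (K:ℝ)/P := ⟨_, rfl⟩
  rw [← ha_def] at hsc hδstar
  have ha : 0 ≤ a := by rw [ha_def]; positivity
  obtain ⟨b, hb_def⟩ : ∃ x : ℝ, x = lam * Lbar + a * (Lbar^2 - 1) := ⟨_, rfl⟩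
  rw [← hb_def] at hδstar
  have hb : 0 < b := by
    rw [hb_def]
    have h1 : 0 < lam * Lbar := mul_pos hlam hLb0
    have h2 : 0 ≤ a * (Lbar^2 - 1) := mul_nonneg ha (by nlinarith)
    linarith
  -- nonzero casts
  have hNc : ((N:ℂ)) ≠ 0 := by exact_mod_cast hNR.ne'
  have hPc : ((P:ℂ)) ≠ 0 := by exact_mod_cast hPR.ne'
  have hLbc : ((Lbar:ℂ)) ≠ 0 := Complex.ofReal_ne_zero.mpr hLb0.ne'
  have hlamc : ((lam:ℂ)) ≠ 0 := Complex.ofReal_ne_zero.mpr hlam.ne'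
  have hQ : (A * Aᴴ) * (A * Aᴴ) = A * Aᴴ := by
    rw [Matrix.mul_assoc, ← Matrix.mul_assoc Aᴴ, hA, Matrix.one_mul]
  -- key equivalence
  have key : ∀ δ : ℝ, 0 ≤ δ →
      (matrixEq δ ↔ δ * (a / (1 + δ) + b) = 1) := by
    intro δ hδ
    have h1δ : (0:ℝ) < 1 + δ := by linarith
    have h1δc : ((1:ℂ) + (δ:ℂ)) = ((1+δ:ℝ):ℂ) := by push_cast; ring
    have h1δc' : ((1:ℂ) + (δ:ℂ)) ≠ 0 := by
      rw [h1δc]; exact Complex.ofReal_ne_zero.mpr h1δ.ne'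
    obtain ⟨t, ht_def⟩ : ∃ x : ℝ,
        x = (K:ℝ)/(P*Lbar)/(1+δ) + a*(Lbar - Lbar⁻¹) + lam := ⟨_, rfl⟩
    have hLbinv : 0 ≤ Lbar - Lbar⁻¹ := by
      rw [sub_nonneg, inv_le_iff_one_le_mul₀ hLb0]
      nlinarith
    have ht : 0 < t := by
      rw [ht_def]
      have h1 : (0:ℝ) ≤ (K:ℝ)/(P*Lbar)/(1+δ) := by positivity
      have h2 : (0:ℝ) ≤ a*(Lbar - Lbar⁻¹) := mul_nonneg ha hLbinv
      linarith
    have htc : ((t:ℝ):ℂ) ≠ 0 := Complex.ofReal_ne_zero.mpr ht.ne'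
    obtain ⟨c, hc_def⟩ : ∃ x : ℂ,
        x = (K:ℂ)/(N:ℂ) * ((1:ℂ)+(δ:ℂ))⁻¹ * ((N:ℂ)/((P:ℂ)*(Lbar:ℂ)))
          + ((K:ℂ)/(P:ℂ)) * ((Lbar:ℂ) - (Lbar:ℂ)⁻¹) := ⟨_, rfl⟩
    have hcval : c + (lam:ℂ) = ((t:ℝ):ℂ) := by
      rw [hc_def, ht_def, h1δc]
      push_cast [ha_def]
      field_simp
    have hM : ((K:ℂ)/(N:ℂ) * ((1:ℂ)+(δ:ℂ))⁻¹) • Φ + S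
        + (lam:ℂ) • (1 : Matrix (Fin N) (Fin N) ℂ)
        = c • (A*Aᴴ) + (lam:ℂ) • 1 := by
      rw [hΦ, hS, smul_smul, ← add_smul, hc_def]
    have hcl : c + (lam:ℂ) ≠ 0 := by rw [hcval]; exact htc
    have hinv := proj_inv (A*Aᴴ) hQ c (lam:ℂ) hcl hlamc
    have htr : Matrix.trace (Φ *
        (((K:ℂ)/(N:ℂ) * ((1:ℂ)+(δ:ℂ))⁻¹) • Φ + S
          + (lam:ℂ) • (1 : Matrix (Fin N) (Fin N) ℂ))⁻¹)
        = ((N:ℂ)/((P:ℂ)*(Lbar:ℂ))) * ((t:ℝ):ℂ)⁻¹ * (P:ℂ) := by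
      rw [hM, hinv, hΦ]
      rw [Matrix.smul_mul, Matrix.mul_add, Matrix.mul_smul, Matrix.mul_smul, hQ,
        Matrix.mul_one]
      rw [smul_add, smul_smul, smul_smul, trace_add, trace_smul, trace_smul,
        tr_proj A hA]
      rw [hcval]
      simp only [smul_eq_mul]
      field_simp
      ring
    have hr_eq : (1/(N:ℝ)) * (((N:ℂ)/((P:ℂ)*(Lbar:ℂ))) * ((t:ℝ):ℂ)⁻¹ * (P:ℂ)).re
        = 1 / (Lbar * t) := by
      have hcast : ((N:ℂ)/((P:ℂ)*(Lbar:ℂ))) * ((t:ℝ):ℂ)⁻¹ * (P:ℂ)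
          = (((N:ℝ)/(Lbar*t) : ℝ) : ℂ) := by
        push_cast
        field_simp
      rw [hcast, Complex.ofReal_re]
      field_simp
    have hLt : Lbar * t = a / (1+δ) + b := by
      rw [ht_def, hb_def, ha_def]
      field_simp
      ring
    rw [hmx δ, htr, hr_eq, hLt, eq_div_iff (by positivity : (0:ℝ) < a/(1+δ)+b).ne']
  -- scalar analysis
  have hab : lam * Lbar + a * Lbar^2 = a + b := by rw [hb_def]; ring
  obtain ⟨s, hs_def⟩ : ∃ x : ℝ,
      x = Real.sqrt ((1 + lam * Lbar + a * Lbar ^ 2) ^ 2 - 4 * a) := ⟨_, rfl⟩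
  rw [← hs_def] at hδstar
  have hdisc : (1 + lam * Lbar + a * Lbar ^ 2) ^ 2 - 4 * a = (a+b-1)^2 + 4*b := by
    rw [hb_def]; ring
  have hs2 : s^2 = (a+b-1)^2 + 4*b := by
    rw [hs_def, Real.sq_sqrt (by rw [hdisc]; positivity), hdisc]
  have hsnn : 0 ≤ s := hs_def ▸ Real.sqrt_nonneg _
  have hs_gt : a + b - 1 < s := by nlinarith
  have hs_gt' : 1 - (a + b) < s := by nlinarith
  have hδstar' : δstar = (1 - (a+b) + s) / (2*b) := by
    rw [hδstar, show 1 - lam*Lbar - a*Lbar^2 = 1 - (a+b) from by rw [← hab]; ring]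
  have hδpos : 0 < δstar := by
    rw [hδstar']
    apply div_pos (by linarith) (by linarith)
  have hnum : (1-(a+b)+s)^2 + 2*(a+b-1)*(1-(a+b)+s) - 4*b = 0 := by
    linear_combination hs2
  have hquad_star : b * δstar^2 + (a+b-1) * δstar - 1 = 0 := by
    have hrepr : b * δstar^2 + (a+b-1) * δstar - 1
        = ((1-(a+b)+s)^2 + 2*(a+b-1)*(1-(a+b)+s) - 4*b) / (4*b) := by
      rw [hδstar']
      field_simp
      ring
    rw [hrepr, hnum, zero_div]
  have quad_iff : ∀ δ : ℝ, 0 ≤ δ →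
      (δ * (a / (1 + δ) + b) = 1 ↔ b * δ^2 + (a+b-1) * δ - 1 = 0) := by
    intro δ hδ
    have h1δ : (0:ℝ) < 1 + δ := by linarith
    have hkey : δ * (a / (1 + δ) + b) - 1 = (b * δ^2 + (a+b-1) * δ - 1) / (1+δ) := by
      field_simp
      ring
    constructor
    · intro h
      have h0 : δ * (a / (1 + δ) + b) - 1 = 0 := by linarith
      rw [hkey, div_eq_zero_iff] at h0
      rcases h0 with h' | h'
      · exact h'
      · exact absurd h' h1δ.ne'
    · intro h
      have h0 : δ * (a / (1 + δ) + b) - 1 = 0 := by rw [hkey, h, zero_div]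
      linarith
  refine ⟨?_, hδpos.le, ?_, ?_⟩
  · intro δ hδ
    have heq : a/(1+δ) + a*(Lbar^2-1) + lam*Lbar = a/(1+δ) + b := by
      rw [hb_def]; ring
    rw [key δ hδ, hsc δ, heq]
  · rw [key δstar hδpos.le, quad_iff δstar hδpos.le]
    exact hquad_star
  · intro δ hδ hm
    have hq : b * δ^2 + (a+b-1) * δ - 1 = 0 := (quad_iff δ hδ).mp ((key δ hδ).mp hm)
    have hfac : (δ - δstar) * (b * (δ + δstar) + (a+b-1)) = 0 := by
      linear_combination hq - hquad_star
    rcases mul_eq_zero.mp hfac with h | h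
    · linarith
    · have hbs : b * δstar = (1 - (a+b) + s) / 2 := by
        rw [hδstar']
        field_simp
      have hbd : 0 ≤ b * δ := mul_nonneg hb.le hδ
      have hexp : b * (δ + δstar) = b * δ + b * δstar := by ring
      linarith [h, hexp, hbs, hs_gt', hbd]
end

section
/- Let α ∈ (0,1], L ≥ 2, L̄ = 1 + α(L−1). For λ > 0 and c > 0, define δ(λ,c) = [1 − λL̄ − cL̄² + √((1 + λL̄ + cL̄²)² − 4c)] / (2[λL̄ + c(L̄² − 1)]), Z = λL̄(1 + δ) + c[1 + (1 + δ)(L̄² − 1)], X = Z²/(Z² − c), Y = X + [1 + α²(L−1)](1 − 2Z) / (L̄²(Z² − c)), and γ̄^MMSE(λ,c) = 1 / ( L̄ λ X + c L̄² Y + α(L̄ − 1) ). Then for any sequences λ_n → 0⁺ and c_n → 0⁺, one has Z_n² − c_n > 0 for all sufficiently large n, and γ̄^MMSE(λ_n, c_n) → 1/(α(L̄ − 1)) as n → ∞. -/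
/-!
`Z` is the larger root of `x² − (1 + λL̄ + cL̄²) x + c`, so it tends to `1` as `λ, c → 0⁺`.
Hence `Z² − c → 1` and `X → 1`, while `Y` stays bounded, so the terms `L̄λX` and `cL̄²Y`
vanish and only the pilot-contamination term `α(L̄ − 1)` survives in the denominator of `γ̄`.
-/

open Filter Topology

/-- The larger root of `x² − b x + c`. -/
noncomputable def largerRoot (b c : ℝ) : ℝ := (b + √(b ^ 2 - 4 * c)) / 2

lemma tendsto_largerRoot {ι : Type*} {l : Filter ι} {b c : ι → ℝ}
    (hb : Tendsto b l (𝓝 1)) (hc : Tendsto c l (𝓝 0)) :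
    Tendsto (fun i => largerRoot (b i) (c i)) l (𝓝 1) := by
  have hdisc : Tendsto (fun i => b i ^ 2 - 4 * c i) l (𝓝 1) := by
    simpa using (hb.pow 2).sub (hc.const_mul 4)
  simpa [largerRoot] using (hb.add hdisc.sqrt).div_const 2

lemma mmse_Z_eq_largerRoot {lam c Lbar δ : ℝ} (hD : lam * Lbar + c * (Lbar ^ 2 - 1) ≠ 0)
    (hδ : δ = (1 - lam * Lbar - c * Lbar ^ 2
          + √((1 + lam * Lbar + c * Lbar ^ 2) ^ 2 - 4 * c))
        / (2 * (lam * Lbar + c * (Lbar ^ 2 - 1)))) :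
    lam * Lbar * (1 + δ) + c * (1 + (1 + δ) * (Lbar ^ 2 - 1))
      = largerRoot (1 + lam * Lbar + c * Lbar ^ 2) c := by
  rw [hδ, largerRoot]
  field_simp
  ring

lemma tendsto_affine_of_tendsto_zero {ι : Type*} {l : Filter ι} {lam c X Y : ι → ℝ}
    {x y : ℝ} (a b k : ℝ) (hlam : Tendsto lam l (𝓝 0)) (hc : Tendsto c l (𝓝 0))
    (hX : Tendsto X l (𝓝 x)) (hY : Tendsto Y l (𝓝 y)) :
    Tendsto (fun i => a * lam i * X i + c i * b * Y i + k) l (𝓝 k) := by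
  simpa using (((hlam.const_mul a).mul hX).add ((hc.mul_const b).mul hY)).add_const k

theorem stmt8_general
    (α : ℝ) (hα0 : 0 < α) (L : ℕ) (hL : 2 ≤ L)
    (Lbar : ℝ) (hLbar : Lbar = 1 + α * (L - 1))
    (δf Zf Xf Yf γf : ℝ → ℝ → ℝ)
    (hδ : ∀ lam c, δf lam c =
      (1 - lam * Lbar - c * Lbar ^ 2
          + Real.sqrt ((1 + lam * Lbar + c * Lbar ^ 2) ^ 2 - 4 * c))
        / (2 * (lam * Lbar + c * (Lbar ^ 2 - 1))))
    (hZ : ∀ lam c, Zf lam c =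
      lam * Lbar * (1 + δf lam c) + c * (1 + (1 + δf lam c) * (Lbar ^ 2 - 1)))
    (hX : ∀ lam c, Xf lam c = (Zf lam c) ^ 2 / ((Zf lam c) ^ 2 - c))
    (hY : ∀ lam c, Yf lam c = Xf lam c
      + (1 + α ^ 2 * (L - 1)) * (1 - 2 * Zf lam c)
          / (Lbar ^ 2 * ((Zf lam c) ^ 2 - c)))
    (hγ : ∀ lam c, γf lam c =
      1 / (Lbar * lam * Xf lam c + c * Lbar ^ 2 * Yf lam c + α * (Lbar - 1)))
    (lam c : ℕ → ℝ) (hlampos : ∀ n, 0 < lam n) (hcpos : ∀ n, 0 < c n)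
    (hlam0 : Tendsto lam atTop (nhds 0)) (hc0 : Tendsto c atTop (nhds 0)) :
    (∀ᶠ n in atTop, 0 < (Zf (lam n) (c n)) ^ 2 - c n) ∧
    Tendsto (fun n => γf (lam n) (c n)) atTop (nhds (1 / (α * (Lbar - 1)))) := by
  have hLbar1 : 1 < Lbar := by
    have : (2 : ℝ) ≤ L := by exact_mod_cast hL
    rw [hLbar]; nlinarith
  have hD (n : ℕ) : lam n * Lbar + c n * (Lbar ^ 2 - 1) ≠ 0 := by
    have := hlampos n; have := hcpos n
    have : 0 < Lbar ^ 2 - 1 := by nlinarith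
    positivity
  have hZ1 : Tendsto (fun n => Zf (lam n) (c n)) atTop (𝓝 1) := by
    have hb : Tendsto (fun n => 1 + lam n * Lbar + c n * Lbar ^ 2) atTop (𝓝 1) := by
      simpa using ((hlam0.mul_const Lbar).const_add 1).add (hc0.mul_const (Lbar ^ 2))
    refine (tendsto_largerRoot hb hc0).congr fun n => ?_
    rw [hZ, mmse_Z_eq_largerRoot (hD n) (hδ _ _)]
  have hW1 : Tendsto (fun n => Zf (lam n) (c n) ^ 2 - c n) atTop (𝓝 1) := by
    simpa using (hZ1.pow 2).sub hc0
  refine ⟨hW1.eventually (eventually_gt_nhds one_pos), ?_⟩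
  have hX1 : Tendsto (fun n => Xf (lam n) (c n)) atTop (𝓝 1) := by
    have h := (hZ1.pow 2).div hW1 one_ne_zero
    rw [one_pow, div_one] at h
    simp only [hX]
    exact h
  have hYlim : Tendsto (fun n => Yf (lam n) (c n)) atTop
      (𝓝 (1 + (1 + α ^ 2 * (L - 1)) * (1 - 2 * 1) / (Lbar ^ 2 * 1))) := by
    simp only [hY]
    exact hX1.add (((hZ1.const_mul 2).const_sub 1).const_mul _ |>.div
      (hW1.const_mul _) (by positivity))
  have hden := tendsto_affine_of_tendsto_zero Lbar (Lbar ^ 2) (α * (Lbar - 1))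
    hlam0 hc0 hX1 hYlim
  simpa [hγ] using hden.inv₀ (by have := sub_pos.2 hLbar1; positivity)

/-- The closed-form MMSE deterministic-equivalent SINR
`γ̄^MMSE(λ,c)` tends to the ultimate limit `1/(α(L̄−1))` as `λ → 0⁺` and
`c → 0⁺`; moreover `Z² − c > 0` eventually along any such sequences. -/
theorem stmt8
    (α : ℝ) (hα0 : 0 < α) (hα1 : α ≤ 1) (L : ℕ) (hL : 2 ≤ L)
    (Lbar : ℝ) (hLbar : Lbar = 1 + α * (L - 1))
    (δf Zf Xf Yf γf : ℝ → ℝ → ℝ)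
    (hδ : ∀ lam c, δf lam c =
      (1 - lam * Lbar - c * Lbar ^ 2
          + Real.sqrt ((1 + lam * Lbar + c * Lbar ^ 2) ^ 2 - 4 * c))
        / (2 * (lam * Lbar + c * (Lbar ^ 2 - 1))))
    (hZ : ∀ lam c, Zf lam c =
      lam * Lbar * (1 + δf lam c) + c * (1 + (1 + δf lam c) * (Lbar ^ 2 - 1)))
    (hX : ∀ lam c, Xf lam c = (Zf lam c) ^ 2 / ((Zf lam c) ^ 2 - c))
    (hY : ∀ lam c, Yf lam c = Xf lam c
      + (1 + α ^ 2 * (L - 1)) * (1 - 2 * Zf lam c)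
          / (Lbar ^ 2 * ((Zf lam c) ^ 2 - c)))
    (hγ : ∀ lam c, γf lam c =
      1 / (Lbar * lam * Xf lam c + c * Lbar ^ 2 * Yf lam c + α * (Lbar - 1)))
    (lam c : ℕ → ℝ) (hlampos : ∀ n, 0 < lam n) (hcpos : ∀ n, 0 < c n)
    (hlam0 : Tendsto lam atTop (nhds 0)) (hc0 : Tendsto c atTop (nhds 0)) :
    (∀ᶠ n in atTop, 0 < (Zf (lam n) (c n)) ^ 2 - c n) ∧
    Tendsto (fun n => γf (lam n) (c n)) atTop (nhds (1 / (α * (Lbar - 1)))) :=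
  stmt8_general α hα0 L hL Lbar hLbar δf Zf Xf Yf γf hδ hZ hX hY hγ lam c hlampos hcpos hlam0 hc0
end

section
/- Let N, K ∈ ℕ be positive, ρ > 0, S ∈ ℂ^{N×N} Hermitian positive semidefinite, and R_1, …, R_K ∈ ℂ^{N×N} Hermitian positive semidefinite. Then there exists a unique vector δ = (δ_1, …, δ_K) ∈ ℝ^K with δ_k ≥ 0 for all k satisfying the system of implicit equations δ_k = (1/N) tr( R_k T(δ) ) for k = 1, …, K, where T(δ) = ( (1/N) Σ_{j=1}^K R_j/(1 + δ_j) + S + ρ I_N )^{−1}. -/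
/-!
The map `F(δ)_k = (1/N) Re tr (R_k T(δ))` behaves like a standard interference function
(Yates) on the nonnegative orthant. It is monotone, because `δ ↦ T(δ)⁻¹` is Loewner-decreasing
and matrix inversion is operator antitone. It is bounded by `tr R_k / (Nρ)`, because
`T(δ)⁻¹ ≥ ρ I`. It is strictly subhomogeneous: for `t > 1`, `T(tδ)⁻¹ ≥ t⁻¹ T(δ)⁻¹ + (1 - t⁻¹) ρ I`,
and the `ρ I` term dominates a multiple of `T(δ)⁻¹`. Knaster–Tarski on the box
`[0, tr R / (Nρ)]` gives a fixed point. Given two fixed points `δ, δ'`, let `t` be the largest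
ratio `δ'_k / δ_k`. If `t > 1`, then `δ' ≤ tδ`, and at the maximising index
`δ'_k = F(δ')_k ≤ F(tδ)_k < t F(δ)_k = δ'_k`. Hence `δ' ≤ δ`. Coordinates with `R_k = 0`
vanish identically and are left out of the ratio.
-/

open Matrix Set Function
open scoped ComplexOrder MatrixOrder Matrix.Norms.L2Operator

section FixedPoint

theorem exists_isFixedPt_of_mapsTo_Icc {α : Type*} [ConditionallyCompleteLattice α] {a b : α}
    (hab : a ≤ b) {f : α → α} (hf : MonotoneOn f (Icc a b)) (hmaps : MapsTo f (Icc a b) (Icc a b)) :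
    ∃ x ∈ Icc a b, IsFixedPt f x := by
  have : Fact (a ≤ b) := ⟨hab⟩
  let g : Icc a b →o Icc a b := ⟨hmaps.restrict f _ _, fun x y hxy => hf x.2 y.2 hxy⟩
  exact ⟨g.lfp, g.lfp.2, congrArg Subtype.val g.map_lfp⟩

variable {ι : Type*} [Fintype ι]

theorem le_of_isFixedPt_of_subhomogeneous {F : (ι → ℝ) → ι → ℝ} (hmono : MonotoneOn F (Ici 0))
    (hsupp : ∀ k, (∀ x ∈ Ici 0, F x k = 0) ∨ ∀ x ∈ Ici 0, 0 < F x k)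
    (hsub : ∀ x ∈ Ici 0, ∀ t : ℝ, 1 < t → ∀ k, 0 < F x k → F (t • x) k < t * F x k)
    {x y : ι → ℝ} (hx : 0 ≤ x) (hy : 0 ≤ y) (hFx : IsFixedPt F x) (hFy : IsFixedPt F y) :
    y ≤ x := by
  classical
  have hFx' (k : ι) : F x k = x k := congrFun hFx k
  have hFy' (k : ι) : F y k = y k := congrFun hFy k
  have hy_eq_zero {k : ι} (hk : ¬ 0 < x k) : y k = 0 := by
    rcases hsupp k with h | h
    · rw [← hFy', h y hy]
    · exact absurd (hFx' k ▸ h x hx) hk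
  set s := Finset.univ.filter fun k => 0 < x k
  by_contra hyx
  obtain ⟨k₀, hk₀⟩ : ∃ k, x k < y k := by simpa [Pi.le_def] using hyx
  have hk₀s : k₀ ∈ s := by
    by_contra h
    have := hy_eq_zero (by simpa [s] using h)
    linarith [show 0 ≤ x k₀ from hx k₀]
  obtain ⟨k₁, hk₁s, hmax⟩ := s.exists_max_image (fun k => y k / x k) ⟨k₀, hk₀s⟩
  have hxk₁ : 0 < x k₁ := by simpa [s] using hk₁s
  set t := y k₁ / x k₁
  have ht : 1 < t := ((one_lt_div (by simpa [s] using hk₀s)).2 hk₀).trans_le (hmax k₀ hk₀s)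
  have hyt : y ≤ t • x := by
    intro k
    by_cases hk : 0 < x k
    · simpa [div_le_iff₀ hk] using hmax k (by simpa [s] using hk)
    · simp [hy_eq_zero hk, mul_nonneg (by linarith : 0 ≤ t) (hx k)]
  have : y k₁ < y k₁ := calc
    y k₁ = F y k₁ := (hFy' k₁).symm
    _ ≤ F (t • x) k₁ := hmono hy (smul_nonneg (by linarith) hx) hyt k₁
    _ < t * F x k₁ := hsub x hx t ht k₁ (hFx' k₁ ▸ hxk₁)
    _ = y k₁ := by rw [hFx', div_mul_cancel₀ _ hxk₁.ne']
  exact lt_irrefl _ this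

end FixedPoint

namespace Matrix

variable {n : Type*}

theorem PosDef.of_le {A B : Matrix n n ℂ} (hA : A.PosDef) (hAB : A ≤ B) : B.PosDef := by
  simpa using hA.add_posSemidef (le_iff.mp hAB)

variable [Fintype n]

theorem PosSemidef.re_trace_pos {R : Matrix n n ℂ} (hR : R.PosSemidef) (h : R ≠ 0) :
    0 < R.trace.re :=
  (Complex.lt_def.mp (hR.trace_nonneg.lt_of_ne' ((hR.trace_eq_zero_iff).not.mpr h))).1

variable [DecidableEq n]

theorem inv_le_inv_of_le {A B : Matrix n n ℂ} (hA : A.PosDef) (hAB : A ≤ B) : B⁻¹ ≤ A⁻¹ := by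
  have := CStarAlgebra.inv_le_inv (a := hA.isUnit.unit) (b := (hA.of_le hAB).isUnit.unit)
    hA.posSemidef.nonneg hAB
  rwa [coe_units_inv, coe_units_inv, IsUnit.unit_spec, IsUnit.unit_spec] at this

theorem IsHermitian.exists_le_smul_one {A : Matrix n n ℂ} (hA : A.IsHermitian) :
    ∃ M : ℝ, 0 < M ∧ A ≤ M • (1 : Matrix n n ℂ) := by
  refine ⟨‖A‖ + 1, by positivity, ?_⟩
  have : A ≤ ‖A‖ • (1 : Matrix n n ℂ) := by
    simpa [Algebra.algebraMap_eq_smul_one] using IsSelfAdjoint.le_algebraMap_norm_self hA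
  exact this.trans (smul_le_smul_of_nonneg_right (by linarith) zero_le_one)

theorem inv_real_smul {A : Matrix n n ℂ} (hA : IsUnit A) {c : ℝ} (hc : c ≠ 0) :
    (c • A)⁻¹ = c⁻¹ • A⁻¹ := by
  refine inv_eq_left_inv ?_
  rw [smul_mul_smul_comm, inv_mul_cancel₀ hc, one_smul,
    nonsing_inv_mul _ ((isUnit_iff_isUnit_det A).mp hA)]

theorem PosSemidef.re_trace_mul_nonneg {R X : Matrix n n ℂ} (hR : R.PosSemidef) (hX : 0 ≤ X) :
    0 ≤ (R * X).trace.re := by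
  obtain ⟨C, rfl⟩ := CStarAlgebra.nonneg_iff_eq_star_mul_self.mp hR.nonneg
  rw [mul_assoc, trace_mul_comm]
  have hCXC := nonneg_iff_posSemidef.mp (star_right_conjugate_nonneg hX C)
  exact (Complex.le_def.mp hCXC.trace_nonneg).1

theorem PosSemidef.re_trace_mul_le {R X Y : Matrix n n ℂ} (hR : R.PosSemidef) (hXY : X ≤ Y) :
    (R * X).trace.re ≤ (R * Y).trace.re := by
  have := hR.re_trace_mul_nonneg (sub_nonneg.mpr hXY)
  rwa [mul_sub, trace_sub, Complex.sub_re, sub_nonneg] at this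

theorem re_trace_mul_real_smul (R X : Matrix n n ℂ) (c : ℝ) :
    (R * (c • X)).trace.re = c * (R * X).trace.re := by
  rw [mul_smul_comm, trace_smul, Complex.smul_re, smul_eq_mul]

end Matrix

section DeterministicEquivalent

variable {ι n : Type*} [Fintype ι] [Fintype n] [DecidableEq n]

/-- `T(δ)⁻¹`, with the normalisation `1/N` written as `(card n)⁻¹`. -/
noncomputable def detEqMatrix (ρ : ℝ) (S : Matrix n n ℂ) (R : ι → Matrix n n ℂ) (δ : ι → ℝ) :
    Matrix n n ℂ :=
  (Fintype.card n : ℝ)⁻¹ • ∑ j, (1 + δ j)⁻¹ • R j + S + ρ • 1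

variable {ρ : ℝ} {S : Matrix n n ℂ} {R : ι → Matrix n n ℂ}

theorem smul_one_le_detEqMatrix (hS : S.PosSemidef) (hR : ∀ k, (R k).PosSemidef) {δ : ι → ℝ}
    (hδ : 0 ≤ δ) : ρ • 1 ≤ detEqMatrix ρ S R δ := by
  refine le_add_of_nonneg_left (add_nonneg (smul_nonneg (by positivity) ?_) hS.nonneg)
  refine Finset.sum_nonneg fun j _ => smul_nonneg ?_ (hR j).nonneg
  have : 0 ≤ δ j := hδ j
  positivity

theorem posDef_detEqMatrix (hρ : 0 < ρ) (hS : S.PosSemidef) (hR : ∀ k, (R k).PosSemidef)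
    {δ : ι → ℝ} (hδ : 0 ≤ δ) : (detEqMatrix ρ S R δ).PosDef :=
  (PosDef.one.smul hρ).of_le (smul_one_le_detEqMatrix hS hR hδ)

theorem antitoneOn_detEqMatrix (hR : ∀ k, (R k).PosSemidef) :
    AntitoneOn (detEqMatrix ρ S R) (Ici 0) := fun δ hδ δ' _ hδδ' => by
  unfold detEqMatrix
  gcongr with j
  · exact (hR j).nonneg
  · have : 0 ≤ δ j := hδ j
    positivity
  · exact hδδ' j

theorem inv_smul_add_le_detEqMatrix_smul (hS : S.PosSemidef) (hR : ∀ k, (R k).PosSemidef)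
    {δ : ι → ℝ} (hδ : 0 ≤ δ) {t : ℝ} (ht : 1 ≤ t) :
    t⁻¹ • detEqMatrix ρ S R δ + ((1 - t⁻¹) * ρ) • 1 ≤ detEqMatrix ρ S R (t • δ) := by
  have hexpand : t⁻¹ • detEqMatrix ρ S R δ + ((1 - t⁻¹) * ρ) • 1 =
      (Fintype.card n : ℝ)⁻¹ • ∑ j, (t⁻¹ * (1 + δ j)⁻¹) • R j + t⁻¹ • S + ρ • 1 := by
    simp only [detEqMatrix, ← smul_smul, ← Finset.smul_sum]
    module
  rw [hexpand, detEqMatrix]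
  gcongr with j
  · exact (hR j).nonneg
  · have : 0 ≤ δ j := hδ j
    rw [← mul_inv, Pi.smul_apply, smul_eq_mul]
    exact inv_anti₀ (by positivity) (by nlinarith)
  · exact smul_le_of_le_one_left hS.nonneg (inv_le_one_of_one_le₀ ht)

variable (ρ S R) in
noncomputable def detEqMap (δ : ι → ℝ) : ι → ℝ :=
  fun k => (Fintype.card n : ℝ)⁻¹ * (R k * (detEqMatrix ρ S R δ)⁻¹).trace.re

theorem detEqMap_nonneg (hρ : 0 < ρ) (hS : S.PosSemidef) (hR : ∀ k, (R k).PosSemidef)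
    {δ : ι → ℝ} (hδ : 0 ≤ δ) : 0 ≤ detEqMap ρ S R δ := fun k =>
  mul_nonneg (by positivity)
    ((hR k).re_trace_mul_nonneg (posDef_detEqMatrix hρ hS hR hδ).inv.posSemidef.nonneg)

theorem detEqMap_le (hρ : 0 < ρ) (hS : S.PosSemidef) (hR : ∀ k, (R k).PosSemidef)
    {δ : ι → ℝ} (hδ : 0 ≤ δ) :
    detEqMap ρ S R δ ≤ fun k => (Fintype.card n : ℝ)⁻¹ * (ρ⁻¹ * (R k).trace.re) := fun k => by
  have hinv : (detEqMatrix ρ S R δ)⁻¹ ≤ ρ⁻¹ • 1 := by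
    simpa [inv_real_smul isUnit_one hρ.ne'] using
      inv_le_inv_of_le (PosDef.one.smul hρ) (smul_one_le_detEqMatrix hS hR hδ)
  have := (hR k).re_trace_mul_le hinv
  rw [re_trace_mul_real_smul, mul_one] at this
  exact mul_le_mul_of_nonneg_left this (by positivity)

theorem monotoneOn_detEqMap (hρ : 0 < ρ) (hS : S.PosSemidef) (hR : ∀ k, (R k).PosSemidef) :
    MonotoneOn (detEqMap ρ S R) (Ici 0) := fun δ hδ δ' hδ' hδδ' k =>
  mul_le_mul_of_nonneg_left ((hR k).re_trace_mul_le (inv_le_inv_of_le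
    (posDef_detEqMatrix hρ hS hR hδ') (antitoneOn_detEqMatrix hR hδ hδ' hδδ'))) (by positivity)

theorem detEqMap_eq_zero {k : ι} (hk : R k = 0) (δ : ι → ℝ) : detEqMap ρ S R δ k = 0 := by
  simp [detEqMap, hk]

theorem detEqMap_pos (hρ : 0 < ρ) (hS : S.PosSemidef) (hR : ∀ k, (R k).PosSemidef)
    {δ : ι → ℝ} (hδ : 0 ≤ δ) {k : ι} (hk : R k ≠ 0) : 0 < detEqMap ρ S R δ k := by
  have hA := posDef_detEqMatrix hρ hS hR hδ
  obtain ⟨M, hM, hAM⟩ := hA.isHermitian.exists_le_smul_one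
  have hinv : M⁻¹ • 1 ≤ (detEqMatrix ρ S R δ)⁻¹ := by
    simpa [inv_real_smul isUnit_one hM.ne'] using inv_le_inv_of_le hA hAM
  have htr := (hR k).re_trace_mul_le hinv
  rw [re_trace_mul_real_smul, mul_one] at htr
  have : Nonempty n := by
    by_contra h
    exact hk (Matrix.ext fun i => (not_nonempty_iff.mp h).elim i)
  exact mul_pos (by positivity) ((mul_pos (inv_pos.2 hM) ((hR k).re_trace_pos hk)).trans_le htr)

theorem detEqMap_smul_lt (hρ : 0 < ρ) (hS : S.PosSemidef) (hR : ∀ k, (R k).PosSemidef)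
    {δ : ι → ℝ} (hδ : 0 ≤ δ) {t : ℝ} (ht : 1 < t) {k : ι} (hk : 0 < detEqMap ρ S R δ k) :
    detEqMap ρ S R (t • δ) k < t * detEqMap ρ S R δ k := by
  set A := detEqMatrix ρ S R δ
  have hA : A.PosDef := posDef_detEqMatrix hρ hS hR hδ
  obtain ⟨M, hM, hAM⟩ := hA.isHermitian.exists_le_smul_one
  set c := (1 - t⁻¹) * ρ
  have hc : 0 < c := mul_pos (sub_pos.2 (inv_lt_one_of_one_lt₀ ht)) hρ
  -- `c • 1` dominates `(c / M) • A`, which makes the inequality strict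
  have hscaled : (t⁻¹ + c / M) • A ≤ detEqMatrix ρ S R (t • δ) := calc
    (t⁻¹ + c / M) • A = t⁻¹ • A + (c / M) • A := add_smul _ _ _
    _ ≤ t⁻¹ • A + c • 1 := by
      gcongr
      calc (c / M) • A ≤ (c / M) • M • (1 : Matrix n n ℂ) := by gcongr
        _ = c • 1 := by rw [smul_smul, div_mul_cancel₀ _ hM.ne']
    _ ≤ _ := inv_smul_add_le_detEqMatrix_smul hS hR hδ ht.le
  have hinv := inv_le_inv_of_le (hA.smul (by positivity)) hscaled
  rw [inv_real_smul hA.isUnit (by positivity)] at hinv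
  have htr := (hR k).re_trace_mul_le hinv
  rw [re_trace_mul_real_smul] at htr
  have hs : (t⁻¹ + c / M)⁻¹ < t :=
    inv_lt_of_inv_lt₀ (by positivity) (lt_add_of_pos_right _ (by positivity))
  calc detEqMap ρ S R (t • δ) k ≤ (t⁻¹ + c / M)⁻¹ * detEqMap ρ S R δ k := by
        rw [detEqMap, detEqMap, mul_left_comm]
        exact mul_le_mul_of_nonneg_left htr (by positivity)
    _ < t * detEqMap ρ S R δ k := mul_lt_mul_of_pos_right hs hk

theorem existsUnique_isFixedPt_detEqMap (hρ : 0 < ρ) (hS : S.PosSemidef)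
    (hR : ∀ k, (R k).PosSemidef) :
    ∃! δ : ι → ℝ, 0 ≤ δ ∧ IsFixedPt (detEqMap ρ S R) δ := by
  have hmono := monotoneOn_detEqMap hρ hS hR
  have hbound : (0 : ι → ℝ) ≤ fun k => (Fintype.card n : ℝ)⁻¹ * (ρ⁻¹ * (R k).trace.re) :=
    fun k => mul_nonneg (by positivity)
      (mul_nonneg (by positivity) (Complex.le_def.mp (hR k).trace_nonneg).1)
  obtain ⟨δ, hδ, hfix⟩ := exists_isFixedPt_of_mapsTo_Icc hbound (hmono.mono Icc_subset_Ici_self)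
    fun δ hδ => ⟨detEqMap_nonneg hρ hS hR hδ.1, detEqMap_le hρ hS hR hδ.1⟩
  have hsupp (k : ι) :
      (∀ x ∈ Ici 0, detEqMap ρ S R x k = 0) ∨ ∀ x ∈ Ici 0, 0 < detEqMap ρ S R x k := by
    by_cases hk : R k = 0
    · exact .inl fun x _ => detEqMap_eq_zero hk x
    · exact .inr fun x hx => detEqMap_pos hρ hS hR hx hk
  have hsub : ∀ x ∈ Ici 0, ∀ t : ℝ, 1 < t → ∀ k, 0 < detEqMap ρ S R x k →
      detEqMap ρ S R (t • x) k < t * detEqMap ρ S R x k :=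
    fun _ hx _ ht _ => detEqMap_smul_lt hρ hS hR hx ht
  refine ⟨δ, ⟨hδ.1, hfix⟩, fun δ' ⟨hδ', hfix'⟩ => le_antisymm ?_ ?_⟩
  · exact le_of_isFixedPt_of_subhomogeneous hmono hsupp hsub hδ.1 hδ' hfix hfix'
  · exact le_of_isFixedPt_of_subhomogeneous hmono hsupp hsub hδ' hδ.1 hfix' hfix

end DeterministicEquivalent

theorem stmt9_general
    (N K : ℕ) (ρ : ℝ) (hρ : 0 < ρ)
    (S : Matrix (Fin N) (Fin N) ℂ) (hS : S.PosSemidef)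
    (R : Fin K → Matrix (Fin N) (Fin N) ℂ) (hR : ∀ k, (R k).PosSemidef)
    (T : (Fin K → ℝ) → Matrix (Fin N) (Fin N) ℂ)
    (hT : ∀ δ : Fin K → ℝ, T δ =
      ((1 / (N : ℂ)) • (∑ j : Fin K, ((1 : ℂ) + (δ j : ℂ))⁻¹ • R j) + S
        + (ρ : ℂ) • (1 : Matrix (Fin N) (Fin N) ℂ))⁻¹) :
    ∃! δ : Fin K → ℝ, (∀ k, 0 ≤ δ k) ∧
      ∀ k, δ k = (1 / (N : ℝ)) * (Matrix.trace (R k * T δ)).re := by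
  have hTeq (δ : Fin K → ℝ) : T δ = (detEqMatrix ρ S R δ)⁻¹ := by
    simp only [hT, detEqMatrix, ← Complex.coe_smul, Fintype.card_fin, one_div]
    push_cast
    rfl
  have hfix (δ : Fin K → ℝ) :
      (∀ k, δ k = (1 / (N : ℝ)) * (R k * T δ).trace.re) ↔ IsFixedPt (detEqMap ρ S R) δ := by
    simp [IsFixedPt, funext_iff, detEqMap, hTeq, eq_comm]
  simpa only [Pi.le_def, Pi.zero_apply, hfix] using existsUnique_isFixedPt_detEqMap hρ hS hR

/-- Existence and uniqueness of the nonnegative solution of the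
fixed-point system `δ_k = (1/N) tr(R_k T(δ))`, where
`T(δ) = ((1/N)Σ_j R_j/(1+δ_j) + S + ρI_N)⁻¹`, for Hermitian PSD `S, R_1, …, R_K`
and `ρ > 0`. -/
theorem stmt9
    (N K : ℕ) (hN : 0 < N) (hK : 0 < K) (ρ : ℝ) (hρ : 0 < ρ)
    (S : Matrix (Fin N) (Fin N) ℂ) (hS : S.PosSemidef)
    (R : Fin K → Matrix (Fin N) (Fin N) ℂ) (hR : ∀ k, (R k).PosSemidef)
    (T : (Fin K → ℝ) → Matrix (Fin N) (Fin N) ℂ)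
    (hT : ∀ δ : Fin K → ℝ, T δ =
      ((1 / (N : ℂ)) • (∑ j : Fin K, ((1 : ℂ) + (δ j : ℂ))⁻¹ • R j) + S
        + (ρ : ℂ) • (1 : Matrix (Fin N) (Fin N) ℂ))⁻¹) :
    ∃! δ : Fin K → ℝ, (∀ k, 0 ≤ δ k) ∧
      ∀ k, δ k = (1 / (N : ℝ)) * (Matrix.trace (R k * T δ)).re :=
  stmt9_general N K ρ hρ S hS R hR T hT
end
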